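/- arXiv:1806.08688 — 6 statements merged into one kernel-verified Lean document; each statement's English description precedes it below -/
import Mathlib

section
/- Let E' be a subset of the edges of a graph G on vertex set {1,...,n}. The squared-length measurement map in dimension 1 restricted to the coordinates of E' is surjective onto ℂ^{|E'|} (equivalently, the coordinate subspace indexed by E' is independent in the 1-dimensional measurement variety of G) if and only if the edges of E' form a forest. -/
/-!
A configuration realizing prescribed squared lengths on a forest is built edge by edge: an edge
of a forest is a bridge, so after realizing the remaining edges one may translate the component
of one endpoint to give the edge any prescribed difference, in particular a square root of its
target. Conversely, on an edge `s(a, b)` of a cycle prescribe `1` and prescribe `0` elsewhere: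
the rest of the cycle still joins `a` and `b` and forces `p a = p b`, contradicting
`(p a - p b) ^ 2 = 1`.
-/

namespace SimpleGraph

variable {V R : Type*}

def IsSqLengthRealization [Ring R] (H : SimpleGraph V) (v : Sym2 V → R) (p : V → R) : Prop :=
  ∀ i j, H.Adj i j → (p i - p j) ^ 2 = v s(i, j)

namespace IsSqLengthRealization

variable [Ring R] {H H' : SimpleGraph V} {v : Sym2 V → R} {p : V → R}

theorem mono (hle : H' ≤ H) (hp : H.IsSqLengthRealization v p) :
    H'.IsSqLengthRealization v p :=
  fun i j hij => hp i j (hle hij)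

theorem eq_of_reachable [NoZeroDivisors R] (hp : H.IsSqLengthRealization v p)
    (hv : ∀ e ∈ H.edgeSet, v e = 0) {x y : V} (hxy : H.Reachable x y) : p x = p y := by
  rw [reachable_iff_reflTransGen] at hxy
  induction hxy with
  | refl => rfl
  | tail _ hadj ih =>
    rw [ih, ← sub_eq_zero, ← sq_eq_zero_iff, hp _ _ hadj]
    exact hv _ hadj

open Classical in
theorem translate_reachable (hp : H.IsSqLengthRealization v p) (b : V) (c : R) :
    H.IsSqLengthRealization v (fun i => if H.Reachable i b then p i + c else p i) := by
  intro i j hij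
  have hiff : H.Reachable i b ↔ H.Reachable j b :=
    ⟨hij.symm.reachable.trans, hij.reachable.trans⟩
  by_cases hi : H.Reachable i b
  · simp only [hi, hiff.mp hi, if_true, add_sub_add_right_eq_sub, hp i j hij]
  · simp only [hi, mt hiff.mpr hi, if_false, hp i j hij]

theorem exists_of_isBridge {a b : V} {d : R}
    (hp : (H.deleteEdges {s(a, b)}).IsSqLengthRealization v p)
    (hbridge : H.IsBridge s(a, b)) (hd : v s(a, b) = d * d) :
    ∃ q, H.IsSqLengthRealization v q := by
  classical
  set H' := H.deleteEdges {s(a, b)}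
  set q := fun i => if H'.Reachable i b then p i + (p a - p b - d) else p i
  have hq : q a - q b = d := by
    have hab : ¬ H'.Reachable a b := isBridge_iff.mp hbridge
    simp only [q, hab, Reachable.refl, if_true, if_false]
    abel
  refine ⟨q, fun i j hij => ?_⟩
  by_cases he : s(i, j) = s(a, b)
  · obtain ⟨rfl, rfl⟩ | ⟨rfl, rfl⟩ := Sym2.eq_iff.mp he
    · rw [hq, sq, hd]
    · rw [← neg_sub, hq, neg_sq, sq, Sym2.eq_swap, hd]
  · exact translate_reachable hp b _ i j
      (deleteEdges_adj.mpr ⟨hij, Set.notMem_singleton_iff.mpr he⟩)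

end IsSqLengthRealization

theorem exists_isSqLengthRealization_of_isAcyclic [Finite V] [Ring R] {H : SimpleGraph V}
    {v : Sym2 V → R} (hv : ∀ e ∈ H.edgeSet, IsSquare (v e)) (hH : H.IsAcyclic) :
    ∃ p, H.IsSqLengthRealization v p := by
  induction H using WellFoundedLT.induction with
  | _ H ih =>
  by_cases hbot : H = ⊥
  · exact ⟨0, fun i j hij => by simp [hbot] at hij⟩
  obtain ⟨e, he⟩ := edgeSet_nonempty.mpr hbot
  induction e using Sym2.ind with
  | _ a b =>
  have hlt : H.deleteEdges {s(a, b)} < H := by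
    rw [← edgeSet_ssubset_edgeSet, edgeSet_deleteEdges]
    exact Set.sdiff_singleton_ssubset.mpr he
  obtain ⟨p, hp⟩ := ih _ hlt (fun e he' => hv e (edgeSet_mono hlt.le he')) (hH.anti hlt.le)
  obtain ⟨d, hd⟩ := hv _ he
  exact hp.exists_of_isBridge (isAcyclic_iff_forall_adj_isBridge.mp hH he) hd

theorem isAcyclic_of_forall_exists_isSqLengthRealization [Ring R] [NoZeroDivisors R]
    [Nontrivial R] {H : SimpleGraph V}
    (h : ∀ v : Sym2 V → R, ∃ p, H.IsSqLengthRealization v p) : H.IsAcyclic := by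
  classical
  refine isAcyclic_iff_forall_adj_isBridge.mpr fun a b hab => isBridge_iff.mpr fun hreach => ?_
  obtain ⟨p, hp⟩ := h fun e => if e = s(a, b) then 1 else 0
  have hpab : p a = p b := by
    refine (hp.mono (deleteEdges_le _)).eq_of_reachable (fun e he => if_neg ?_) hreach
    rw [edgeSet_deleteEdges] at he
    exact he.2
  simpa [hpab] using hp a b hab

end SimpleGraph

theorem stmt0_general (n : ℕ) (H : SimpleGraph (Fin n)) :
    (∀ v : Sym2 (Fin n) → ℂ, ∃ p : Fin n → ℂ,
      ∀ i j : Fin n, H.Adj i j → (p i - p j) ^ 2 = v s(i, j)) ↔ H.IsAcyclic :=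
  ⟨SimpleGraph.isAcyclic_of_forall_exists_isSqLengthRealization, fun hH _ =>
    SimpleGraph.exists_isSqLengthRealization_of_isAcyclic
      (fun _ _ => IsAlgClosed.exists_eq_mul_self _) hH⟩

/-- The 1-dimensional squared-length measurement map restricted to the edges of a
subgraph `H ≤ G` is surjective onto all target values iff the edges of `H` form a forest. -/
theorem stmt0 (n : ℕ) (G H : SimpleGraph (Fin n)) (hle : H ≤ G) :
    (∀ v : Sym2 (Fin n) → ℂ, ∃ p : Fin n → ℂ,
      ∀ i j : Fin n, H.Adj i j → (p i - p j) ^ 2 = v s(i, j)) ↔ H.IsAcyclic :=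
  stmt0_general n H
end

section
/- Infinitesimal rigidity is invariant under nonsingular affine transformations: if (G,p) is a framework in ℝ^d and A is an invertible affine transformation of ℝ^d, then (G,p) is infinitesimally rigid if and only if (G, A∘p) is infinitesimally rigid. -/
open scoped RealInnerProductSpace

/-- `q` is an infinitesimal flex of the framework `(G, p)`. -/
def IsInfFlex {n d : ℕ} (G : SimpleGraph (Fin n))
    (p q : Fin n → EuclideanSpace ℝ (Fin d)) : Prop :=
  ∀ i j, G.Adj i j → ⟪p i - p j, q i - q j⟫ = 0

/-- `q` is a trivial infinitesimal flex of the configuration `p`: it comes from a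
skew-symmetric linear map plus a translation. -/
def IsTrivialFlex {n d : ℕ} (p q : Fin n → EuclideanSpace ℝ (Fin d)) : Prop :=
  ∃ (S : EuclideanSpace ℝ (Fin d) →ₗ[ℝ] EuclideanSpace ℝ (Fin d))
    (t : EuclideanSpace ℝ (Fin d)),
    (∀ x y, ⟪S x, y⟫ = -⟪x, S y⟫) ∧ ∀ i, q i = S (p i) + t

/-- `(G, p)` is infinitesimally rigid: every infinitesimal flex is trivial. -/
def IsInfRigid {n d : ℕ} (G : SimpleGraph (Fin n))
    (p : Fin n → EuclideanSpace ℝ (Fin d)) : Prop :=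
  ∀ q, IsInfFlex G p q → IsTrivialFlex p q

lemma rigid_affine_image {n d : ℕ} (G : SimpleGraph (Fin n))
    (p : Fin n → EuclideanSpace ℝ (Fin d))
    (M : EuclideanSpace ℝ (Fin d) ≃ₗ[ℝ] EuclideanSpace ℝ (Fin d))
    (t : EuclideanSpace ℝ (Fin d)) (h : IsInfRigid G p) :
    IsInfRigid G (fun i => M (p i) + t) := by
  intro q hq
  set Mt := LinearMap.adjoint (M : EuclideanSpace ℝ (Fin d) →ₗ[ℝ] EuclideanSpace ℝ (Fin d))
  set Ni := (M.symm : EuclideanSpace ℝ (Fin d) →ₗ[ℝ] EuclideanSpace ℝ (Fin d))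
  set Nt := LinearMap.adjoint Ni
  have hflex : IsInfFlex G p (fun i => Mt (q i)) := by
    intro i j hij
    have h0 := hq i j hij
    simp only at h0
    have hMd : M (p i) + t - (M (p j) + t) = M (p i - p j) := by simp [map_sub]
    rw [hMd] at h0
    calc ⟪p i - p j, Mt (q i) - Mt (q j)⟫
        = ⟪p i - p j, Mt (q i - q j)⟫ := by rw [map_sub]
      _ = ⟪M (p i - p j), q i - q j⟫ := LinearMap.adjoint_inner_right _ _ _
      _ = 0 := h0
  obtain ⟨S, c, hS, heq⟩ := h _ hflex
  refine ⟨Nt ∘ₗ S ∘ₗ Ni, Nt c - Nt (S (Ni t)), ?_, ?_⟩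
  · intro x y
    calc ⟪Nt (S (Ni x)), y⟫ = ⟪S (Ni x), Ni y⟫ := LinearMap.adjoint_inner_left _ _ _
      _ = -⟪Ni x, S (Ni y)⟫ := hS _ _
      _ = -⟪x, Nt (S (Ni y))⟫ := by rw [LinearMap.adjoint_inner_right]
  · intro i
    have hq' : q i = Nt (Mt (q i)) := by
      refine ext_inner_right ℝ fun v => ?_
      rw [LinearMap.adjoint_inner_left, LinearMap.adjoint_inner_left]
      simp [Ni]
    rw [hq', show Mt (q i) = S (p i) + c from heq i]
    have hNi : Ni (M (p i) + t) = p i + Ni t := by simp [Ni]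
    simp only [LinearMap.comp_apply, hNi, map_add]
    simp only [Ni, LinearEquiv.coe_coe, LinearEquiv.symm_apply_apply]
    abel

/-- Infinitesimal rigidity is invariant under invertible affine transformations
`x ↦ M x + t`. -/
theorem stmt6 (n d : ℕ) (G : SimpleGraph (Fin n))
    (p : Fin n → EuclideanSpace ℝ (Fin d))
    (M : EuclideanSpace ℝ (Fin d) ≃ₗ[ℝ] EuclideanSpace ℝ (Fin d))
    (t : EuclideanSpace ℝ (Fin d)) :
    IsInfRigid G p ↔ IsInfRigid G (fun i => M (p i) + t) := by
  constructor
  · exact fun h => rigid_affine_image G p M t h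
  · intro h
    have := rigid_affine_image G (fun i => M (p i) + t) M.symm (-(M.symm t)) h
    convert this using 2 with i
    simp
end

section
/- Fix a configuration p of n points in ℂ^d and a graph G with m edges. The image under the squared-length measurement map m_G of the set of all affine images of p is a linear subspace of ℂ^m. Concretely, the map n_{G,p} from symmetric d×d complex matrices Q to ℂ^m defined coordinatewise by n_{G,p}(Q)_{ij} = tr(Q e_{ij} e_{ij}^T), where e_{ij} = p i - p j, is linear, and its image equals { m_G(M∘p + t) : M a d×d complex matrix, t ∈ ℂ^d }. -/
/-- The complex squared-length measurement of a configuration `q : Fin n → ℂ^d` on the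
edges of `G` (edges indexed by adjacent ordered pairs). -/
noncomputable def cMeas {n d : ℕ} (G : SimpleGraph (Fin n)) (q : Fin n → Fin d → ℂ) :
    {x : Fin n × Fin n // G.Adj x.1 x.2} → ℂ :=
  fun e => ∑ k, (q e.1.1 k - q e.1.2 k) ^ 2

/-- The map `Q ↦ (tr (Q e_{ij} e_{ij}ᵀ))_{ij ∈ E}` on `d×d` matrices, where
`e_{ij} = p i - p j`. -/
noncomputable def nGp {n d : ℕ} (G : SimpleGraph (Fin n)) (p : Fin n → Fin d → ℂ) :
    Matrix (Fin d) (Fin d) ℂ → ({x : Fin n × Fin n // G.Adj x.1 x.2} → ℂ) :=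
  fun Q e => (Q * Matrix.vecMulVec (p e.1.1 - p e.1.2) (p e.1.1 - p e.1.2)).trace

/-!
Translations do not change edge vectors, and the squared length of `M e` is the bilinear
expression `eᵀ (Mᵀ M) e = tr (Mᵀ M e eᵀ)`. Hence the measurements of the affine images of `p` are
exactly the values of the linear map `n_{G,p}` at the Gram matrices `Mᵀ M`. Over `ℂ` every symmetric
matrix is such a Gram matrix (diagonalise the symmetric bilinear form by congruence and take square
roots of the diagonal entries), so the measurement set is the image of the subspace of symmetric
matrices under a linear map.
-/

open Matrix

namespace Matrix

variable {ι R K : Type*} [Fintype ι]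

lemma trace_mul_vecMulVec [CommSemiring R] (A : Matrix ι ι R) (v w : ι → R) :
    (A * vecMulVec v w).trace = w ⬝ᵥ (A *ᵥ v) := by
  rw [mul_vecMulVec, trace_vecMulVec, dotProduct_comm]

lemma sum_mulVec_sq [CommSemiring R] (M : Matrix ι ι R) (v : ι → R) :
    ∑ k, (M *ᵥ v) k ^ 2 = (Mᵀ * M * vecMulVec v v).trace := by
  rw [trace_mul_vecMulVec, ← mulVec_mulVec, mulVec_transpose, dotProduct_comm, ← dotProduct_mulVec]
  simp only [dotProduct, sq]

variable [DecidableEq ι] [Field K]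

lemma IsSymm.exists_eq_transpose_mul_diagonal_mul [Invertible (2 : K)] {Q : Matrix ι ι K}
    (hQ : Q.IsSymm) : ∃ (P : Matrix ι ι K) (w : ι → K), Pᵀ * diagonal w * P = Q := by
  set B := Matrix.toBilin' Q
  obtain ⟨v, hv⟩ := LinearMap.BilinForm.exists_orthogonal_basis
    (LinearMap.BilinForm.isSymm_iff.1 (isSymm_toBilin'_iff_isSymm.2 hQ))
  set b := v.reindex (v.indexEquiv (Pi.basisFun K ι))
  have hb : LinearMap.BilinForm.toMatrix b B = diagonal fun i => B (b i) (b i) := by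
    ext i j
    rcases eq_or_ne i j with rfl | hij
    · simp [LinearMap.BilinForm.toMatrix_apply]
    · rw [LinearMap.BilinForm.toMatrix_apply, diagonal_apply_ne _ hij, Module.Basis.reindex_apply,
        Module.Basis.reindex_apply]
      exact hv ((Equiv.injective _).ne hij)
  refine ⟨b.toMatrix (Pi.basisFun K ι), fun i => B (b i) (b i), ?_⟩
  rw [← hb, LinearMap.BilinForm.toMatrix_mul_basis_toMatrix, LinearMap.BilinForm.toMatrix_basisFun,
    LinearMap.BilinForm.toMatrix'_toBilin']

lemma IsSymm.exists_transpose_mul_self_eq [IsAlgClosed K] [Invertible (2 : K)] {Q : Matrix ι ι K}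
    (hQ : Q.IsSymm) : ∃ M : Matrix ι ι K, Mᵀ * M = Q := by
  obtain ⟨P, w, rfl⟩ := hQ.exists_eq_transpose_mul_diagonal_mul
  choose s hs using fun i => IsAlgClosed.exists_eq_mul_self (w i)
  refine ⟨diagonal s * P, ?_⟩
  rw [transpose_mul, diagonal_transpose, Matrix.mul_assoc, ← Matrix.mul_assoc (diagonal s),
    diagonal_mul_diagonal, ← funext hs, Matrix.mul_assoc]

variable (ι R) in
def symmetricSubmodule [Semiring R] : Submodule R (Matrix ι ι R) where
  carrier := {Q | Q.IsSymm}
  add_mem' := IsSymm.add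
  zero_mem' := isSymm_zero
  smul_mem' c _ hQ := hQ.smul c

end Matrix

section Measurement

variable {n d : ℕ} (G : SimpleGraph (Fin n)) (p : Fin n → Fin d → ℂ)

lemma isLinearMap_nGp : IsLinearMap ℂ (nGp G p) where
  map_add A B := funext fun e => by simp only [nGp, Matrix.add_mul, trace_add, Pi.add_apply]
  map_smul c A := funext fun e => by simp only [nGp, Matrix.smul_mul, trace_smul, Pi.smul_apply]

lemma cMeas_affine (M : Matrix (Fin d) (Fin d) ℂ) (t : Fin d → ℂ) :
    cMeas G (fun i => M *ᵥ p i + t) = nGp G p (Mᵀ * M) := by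
  funext e
  simp only [cMeas, nGp, ← sum_mulVec_sq, mulVec_sub, Pi.sub_apply, Pi.add_apply,
    add_sub_add_right_eq_sub]

lemma range_cMeas_affine :
    Set.range (fun Mt : Matrix (Fin d) (Fin d) ℂ × (Fin d → ℂ) =>
        cMeas G (fun i => Mt.1 *ᵥ p i + Mt.2)) = nGp G p '' {Q | Q.IsSymm} := by
  ext y
  constructor
  · rintro ⟨⟨M, t⟩, rfl⟩
    exact ⟨Mᵀ * M, isSymm_transpose_mul_self M, (cMeas_affine G p M t).symm⟩
  · rintro ⟨Q, hQ, rfl⟩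
    obtain ⟨M, rfl⟩ := hQ.exists_transpose_mul_self_eq
    exact ⟨(M, 0), cMeas_affine G p M 0⟩

end Measurement

/-- The measurement image of the set of affine images of a fixed configuration `p` is a
linear subspace of `ℂ^m`: the map `n_{G,p}` is linear, its image on symmetric matrices
is exactly the set of measurements of affine images `M ∘ p + t` of `p`, and hence the
latter set is (the underlying set of) a linear subspace. -/
theorem stmt9 (n d : ℕ) (G : SimpleGraph (Fin n)) (p : Fin n → Fin d → ℂ) :
    IsLinearMap ℂ (nGp G p) ∧
    (Set.range (fun Mt : Matrix (Fin d) (Fin d) ℂ × (Fin d → ℂ) =>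
        cMeas G (fun i => Mt.1.mulVec (p i) + Mt.2))
      = nGp G p '' {Q | Q.IsSymm}) ∧
    ∃ S : Submodule ℂ ({x : Fin n × Fin n // G.Adj x.1 x.2} → ℂ),
      (S : Set ({x : Fin n × Fin n // G.Adj x.1 x.2} → ℂ))
        = Set.range (fun Mt : Matrix (Fin d) (Fin d) ℂ × (Fin d → ℂ) =>
            cMeas G (fun i => Mt.1.mulVec (p i) + Mt.2)) := by
  have hlin := isLinearMap_nGp G p
  refine ⟨hlin, range_cMeas_affine G p,
    (symmetricSubmodule (Fin d) ℂ).map (IsLinearMap.mk' _ hlin), ?_⟩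
  rw [Submodule.map_coe, range_cMeas_affine]
  rfl
end

section
/- If two graphs G and H on the same number of edges have equal 1-dimensional measurement varieties M_{1,G} = M_{1,H} ⊆ ℂ^m (under a fixed edge ordering/bijection σ), then σ is a cycle isomorphism: a set of edges of G forms a simple cycle in G if and only if its image under σ forms a simple cycle in H. -/
/-- A set of edges (given as unordered pairs) is the edge set of a simple cycle of `G`. -/
def IsCycleSet {V : Type*} (G : SimpleGraph V) (E' : Set (Sym2 V)) : Prop :=
  ∃ (v : V) (c : G.Walk v v), c.IsCycle ∧ {e | e ∈ c.edges} = E'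

/-!
The edge sets of cycles of `G` are exactly the minimal sets of coordinates that satisfy a
nontrivial polynomial relation on the measurement variety, and such relations are read off its
vanishing ideal, which two graphs with the same variety share.

A cycle is dependent: its edge vectors `zᵢ = p vᵢ - p vᵢ₊₁` sum to zero, so the squared lengths
`zᵢ²` are a zero of the polynomial `Q` with `Q (z₁², …, z_k²) = ∏_{ε ∈ {±1}^k} ∑ εᵢ zᵢ`; the
product is invariant under each sign change `zⱼ ↦ -zⱼ`, so only even exponents occur and `Q`
exists. A forest is independent: every edge of an acyclic graph is a bridge, so arbitrary squared
lengths are realized edge by edge. A cycle minus an edge is a path, so cycles are minimal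
dependent sets; conversely a dependent set contains a cycle, which by minimality is all of it.
-/

open MvPolynomial

namespace MvPolynomial

variable {σ R : Type*} [CommSemiring R]

theorem coeff_bind₁_C_mul_X (a : σ → R) (f : MvPolynomial σ R) (d : σ →₀ ℕ) :
    coeff d (bind₁ (fun i => C (a i) * X i) f) = (d.prod fun i n => a i ^ n) * coeff d f := by
  classical
  induction f using MvPolynomial.induction_on' with
  | monomial e c =>
    simp only [bind₁_monomial, mul_pow, Finset.prod_mul_distrib, ← map_pow, ← map_prod,
      coeff_C_mul, prod_X_pow_eq_monomial, coeff_monomial]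
    split_ifs with h
    · rw [h, Finsupp.prod, mul_comm, mul_one]
    · simp only [mul_zero]
  | add f g hf hg => simp only [map_add, coeff_add, hf, hg, mul_add]

theorem exists_expand_eq_of_forall_dvd {p : ℕ} (f : MvPolynomial σ R)
    (h : ∀ d ∈ f.support, ∀ i, p ∣ d i) : ∃ g, expand p g = f := by
  refine ⟨∑ d ∈ f.support, monomial (d.mapRange (· / p) (Nat.zero_div p)) (coeff d f), ?_⟩
  conv_rhs => rw [← support_sum_monomial_coeff f]
  refine (map_sum _ _ _).trans (Finset.sum_congr rfl fun d hd => ?_)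
  rw [expand_monomial]
  congr 2
  ext i
  simp [Nat.mul_div_cancel' (h d hd i)]

end MvPolynomial

section SignedSums

variable {σ K : Type*} [Fintype σ] [Field K]

noncomputable def signedSum (ε : σ → ℤˣ) : MvPolynomial σ K := ∑ i, C ((ε i : ℤ) : K) * X i

theorem bind₁_C_mul_X_signedSum (η ε : σ → ℤˣ) :
    bind₁ (fun i => C ((η i : ℤ) : K) * X i) (signedSum ε) = signedSum (η * ε) := by
  simp only [signedSum, map_sum, map_mul, bind₁_C_right, bind₁_X_right]
  refine Finset.sum_congr rfl fun i _ => ?_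
  simp only [Pi.mul_apply, Units.val_mul, Int.cast_mul, map_mul]
  ring

theorem signedSum_ne_zero [CharZero K] [Nonempty σ] (ε : σ → ℤˣ) :
    signedSum ε ≠ (0 : MvPolynomial σ K) := by
  intro h
  simpa [signedSum, ← Int.cast_mul] using congrArg (eval fun i => ((ε i : ℤ) : K)) h

variable [DecidableEq σ]

variable (σ K) in
noncomputable def prodSignedSums : MvPolynomial σ K := ∏ ε : σ → ℤˣ, signedSum ε

theorem bind₁_C_mul_X_prodSignedSums (η : σ → ℤˣ) :
    bind₁ (fun i => C ((η i : ℤ) : K) * X i) (prodSignedSums σ K) = prodSignedSums σ K := by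
  simp only [prodSignedSums, map_prod, bind₁_C_mul_X_signedSum]
  exact Fintype.prod_equiv (Equiv.mulLeft η) _ _ fun _ => rfl

theorem even_of_mem_support_prodSignedSums [CharZero K] {d : σ →₀ ℕ}
    (hd : d ∈ (prodSignedSums σ K).support) (j : σ) : Even (d j) := by
  have hflip := coeff_bind₁_C_mul_X (fun i => (((Pi.mulSingle j (-1) : σ → ℤˣ) i : ℤ) : K))
    (prodSignedSums σ K) d
  rw [bind₁_C_mul_X_prodSignedSums, Finsupp.prod_fintype _ _ (by simp),
    Fintype.prod_eq_single j fun i hi => by simp [Pi.mulSingle_eq_of_ne hi]] at hflip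
  rw [← neg_one_pow_eq_one_iff_even (R := K) (by norm_num)]
  simpa using (mul_eq_right₀ (mem_support_iff.1 hd)).1 hflip.symm

end SignedSums

theorem exists_ne_zero_eval_sq_eq_zero_of_sum_eq_zero {σ K : Type*} [Fintype σ] [Nonempty σ]
    [Field K] [CharZero K] :
    ∃ Q : MvPolynomial σ K, Q ≠ 0 ∧ ∀ z : σ → K, ∑ i, z i = 0 → eval (z ^ 2) Q = 0 := by
  classical
  obtain ⟨Q, hQ⟩ := exists_expand_eq_of_forall_dvd (prodSignedSums σ K)
    fun d hd j => (even_iff_two_dvd).1 (even_of_mem_support_prodSignedSums hd j)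
  refine ⟨Q, ?_, fun z hz => ?_⟩
  · rintro rfl
    have hP : prodSignedSums σ K ≠ 0 :=
      Finset.prod_ne_zero_iff.2 fun ε _ => signedSum_ne_zero ε
    exact hP (by rw [← hQ, map_zero])
  · rw [← eval_expand, hQ, prodSignedSums, map_prod]
    exact Finset.prod_eq_zero (Finset.mem_univ 1) (by simp [signedSum, hz])

namespace SimpleGraph

variable {V : Type*} {G : SimpleGraph V}

theorem Walk.sum_darts_sub {M : Type*} [AddCommGroup M] {u v : V} (w : G.Walk u v) (f : V → M) :
    (w.darts.map fun d => f d.fst - f d.snd).sum = f u - f v := by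
  induction w with
  | nil => simp
  | cons h q ih => simp [ih]

theorem Walk.IsPath.isAcyclic_fromEdgeSet {u v : V} {p : G.Walk u v} (hp : p.IsPath) :
    (fromEdgeSet {e | e ∈ p.edges}).IsAcyclic := by
  induction p with
  | nil => simp
  | @cons u v w h q ih =>
    rw [cons_isPath_iff] at hp
    have hsplit :
        fromEdgeSet {e | e ∈ (cons h q).edges} = fromEdgeSet {e | e ∈ q.edges} ⊔ edge u v := by
      rw [edge, ← fromEdgeSet_union]
      congr 1
      ext e
      simp
    rw [hsplit]
    refine (ih hp.1).sup_edge_of_not_reachable ?_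
    rintro ⟨r⟩
    have hne : ¬ r.Nil := Walk.not_nil_of_ne h.ne
    have hadj := r.adj_snd hne
    rw [fromEdgeSet_adj] at hadj
    exact hp.2 (q.fst_mem_support_of_mem_edges hadj.1)

theorem Walk.IsCycle.exists_isPath_of_mem_edges {v : V} {c : G.Walk v v} (hc : c.IsCycle)
    {e : Sym2 V} (he : e ∈ c.edges) :
    ∃ (a b : V) (p : G.Walk a b), p.IsPath ∧ {f | f ∈ c.edges} \ {e} ⊆ {f | f ∈ p.edges} := by
  classical
  obtain ⟨⟨⟨u, w⟩, huw⟩, hd, rfl⟩ := List.mem_map.1 he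
  have hu : u ∈ c.support := c.dart_fst_mem_support_of_mem_darts hd
  have hedges : ∀ f, f ∈ (c.rotate u hu).edges ↔ f ∈ c.edges :=
    fun f => (c.rotate_edges u hu).mem_iff
  have hd' : _ ∈ (c.rotate u hu).darts := (c.rotate_darts u hu).mem_iff.2 hd
  have hc' := hc.rotate hu
  generalize c.rotate u hu = c' at hedges hd' hc'
  cases c' with
  | nil => simp at hd'
  | @cons _ w' _ h q =>
    rw [cons_isCycle_iff] at hc'
    refine ⟨_, _, q, hc'.1, fun f ⟨hf, hfe⟩ => ?_⟩
    rw [darts_cons, List.mem_cons] at hd'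
    rcases hd' with hfirst | hlast
    · obtain rfl : w = w' := congrArg (·.snd) hfirst
      have hf' := (hedges f).2 hf
      rw [edges_cons, List.mem_cons] at hf'
      exact hf'.resolve_left hfe
    · -- `u` is the last vertex of the path `q`, so it is the tail of none of its darts.
      have hu' : u ∈ q.support.dropLast := by
        rw [← map_fst_darts]
        exact List.mem_map_of_mem (f := (·.fst)) hlast
      have hnd := hc'.1.support_nodup
      rw [← dropLast_support_concat q, List.nodup_append] at hnd
      exact absurd rfl (hnd.2.2 u hu' u (List.mem_singleton_self u))

theorem Walk.IsCycle.isAcyclic_fromEdgeSet_diff {v : V} {c : G.Walk v v} (hc : c.IsCycle)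
    {e : Sym2 V} (he : e ∈ c.edges) : (fromEdgeSet ({f | f ∈ c.edges} \ {e})).IsAcyclic := by
  obtain ⟨a, b, p, hp, hsub⟩ := hc.exists_isPath_of_mem_edges he
  exact hp.isAcyclic_fromEdgeSet.anti (fromEdgeSet_mono hsub)

theorem IsAcyclic.exists_sq_sub_eq {K : Type*} [Field K] [IsAlgClosed K] {F : SimpleGraph V}
    (hF : F.IsAcyclic) (hfin : F.edgeSet.Finite) (w : Sym2 V → K) :
    ∃ p : V → K, ∀ ⦃a b⦄, F.Adj a b → (p a - p b) ^ 2 = w s(a, b) := by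
  classical
  induction h : F.edgeSet.ncard using Nat.strong_induction_on generalizing F with
  | _ n ih =>
    rcases F.edgeSet.eq_empty_or_nonempty with hempty | ⟨e, he⟩
    · obtain rfl := edgeSet_eq_empty.1 hempty
      exact ⟨0, fun a b hab => hab.elim⟩
    obtain ⟨x, y⟩ := e
    set F' := F.deleteEdges {s(x, y)}
    have hlt : F'.edgeSet.ncard < n := by
      rw [← h, edgeSet_deleteEdges]
      exact Set.ncard_sdiff_singleton_lt_of_mem he hfin
    obtain ⟨p, hp⟩ := ih _ hlt (hF.anti (deleteEdges_le _))
      (hfin.subset (edgeSet_mono (deleteEdges_le _))) rfl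
    have hyx : ¬ F'.Reachable y x := fun hr =>
      isBridge_iff.1 (isAcyclic_iff_forall_adj_isBridge.1 hF he) hr.symm
    obtain ⟨z, hz⟩ := IsAlgClosed.exists_pow_nat_eq (w s(x, y)) two_pos
    -- `s(x, y)` is a bridge: translating the component of `y` in `F'` keeps all other lengths.
    refine ⟨fun v => if F'.Reachable y v then p v + (p x - p y - z) else p v, fun a b hab => ?_⟩
    by_cases hab' : s(a, b) = s(x, y)
    · rcases Sym2.eq_iff.1 hab' with ⟨rfl, rfl⟩ | ⟨rfl, rfl⟩
      · simp only [hyx, Reachable.refl, if_true, if_false, ← hz]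
        ring
      · rw [Sym2.eq_swap, ← hz]
        simp only [hyx, Reachable.refl, if_true, if_false]
        ring
    · have hadj : F'.Adj a b := by simp [F', hab, hab']
      by_cases hya : F'.Reachable y a
      · have hyb : F'.Reachable y b := hya.trans hadj.reachable
        simp only [hya, hyb, if_true, add_sub_add_right_eq_sub]
        exact hp hadj
      · have hyb : ¬ F'.Reachable y b := fun hyb => hya (hyb.trans hadj.symm.reachable)
        simp only [hya, hyb, if_false]
        exact hp hadj

end SimpleGraph

section Measurement

open SimpleGraph

variable {K ι V : Type*} [Field K]

def edgeLabel (e : ι → V × V) (a : ι) : Sym2 V := s((e a).1, (e a).2)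

def measurementMap (e : ι → V × V) (p : V → K) : ι → K := fun a => (p (e a).1 - p (e a).2) ^ 2

variable (K) in
def measurementIdeal (e : ι → V × V) : Ideal (MvPolynomial ι K) :=
  vanishingIdeal K (Set.range (measurementMap (K := K) e))

/-- For `I = measurementIdeal K e` this says that `t` is not independent in the measurement
variety: its projection to the coordinates `t` is not of full dimension `|t|`. -/
def IsDependent (I : Ideal (MvPolynomial ι K)) (t : Set ι) : Prop :=
  ∃ f ∈ I, f ≠ 0 ∧ (f.vars : Set ι) ⊆ t

theorem vanishingIdeal_zeroLocus_vanishingIdeal {σ : Type*} (S : Set (σ → K)) :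
    vanishingIdeal K (zeroLocus K (vanishingIdeal K S)) = vanishingIdeal K S :=
  zeroLocus_vanishingIdeal_galoisConnection.u_l_u_eq_u (OrderDual.toDual S)

theorem not_isDependent_vanishingIdeal [Infinite K] {S : Set (ι → K)} {t : Set ι}
    (h : ∀ x : ι → K, ∃ y ∈ S, ∀ a ∈ t, y a = x a) : ¬ IsDependent (vanishingIdeal K S) t := by
  rintro ⟨f, hfS, hf0, hft⟩
  refine hf0 (MvPolynomial.funext fun x => ?_)
  obtain ⟨y, hyS, hyx⟩ := h x
  rw [map_zero, ← (mem_vanishingIdeal_iff.1 hfS) y hyS, aeval_eq_eval]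
  exact hom_congr_vars (by ext; simp) (fun a ha _ => by simp [hyx a (hft ha)]) rfl

theorem sq_sub_eq_sq_sub_of_sym2_eq {R : Type*} [CommRing R] (p : V → R) {a b x y : V}
    (h : s(a, b) = s(x, y)) : (p a - p b) ^ 2 = (p x - p y) ^ 2 := by
  rcases Sym2.eq_iff.1 h with ⟨rfl, rfl⟩ | ⟨rfl, rfl⟩
  · rfl
  · ring

theorem isDependent_measurementIdeal_of_isCircuit [CharZero K] {G : SimpleGraph V}
    {e : ι → V × V} {v : V} {c : G.Walk v v} (hc : c.IsCircuit) {t : Set ι}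
    (ht : ∀ f ∈ c.edges, f ∈ edgeLabel e '' t) : IsDependent (measurementIdeal K e) t := by
  classical
  have hne : Nonempty (Fin c.darts.length) :=
    ⟨⟨0, by simpa using Walk.not_nil_iff_lt_length.1 hc.not_nil⟩⟩
  choose φ hφt hφ using fun i : Fin c.darts.length =>
    ht _ (List.mem_map_of_mem (List.getElem_mem i.2))
  have hφinj : Function.Injective φ := by
    intro i j hij
    have hnd : (c.darts.map Dart.edge).Nodup := hc.edges_nodup
    refine Fin.ext
      ((hnd.getElem_inj_iff (hi := by simpa using i.2) (hj := by simpa using j.2)).1 ?_)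
    simp only [List.getElem_map, ← hφ, hij]
  obtain ⟨Q, hQ0, hQ⟩ :=
    exists_ne_zero_eval_sq_eq_zero_of_sum_eq_zero (σ := Fin c.darts.length) (K := K)
  refine ⟨rename φ Q, ?_, (rename_injective φ hφinj).ne_iff' (map_zero _) |>.2 hQ0, ?_⟩
  · rintro _ ⟨p, rfl⟩
    rw [aeval_eq_eval, eval_rename]
    have hsq : measurementMap e p ∘ φ = (fun i => p c.darts[i.1].fst - p c.darts[i.1].snd) ^ 2 :=
      funext fun i => sq_sub_eq_sq_sub_of_sym2_eq p (hφ i)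
    rw [hsq]
    refine hQ _ ?_
    rw [Fin.sum_univ_fun_getElem c.darts (fun d => p d.fst - p d.snd), Walk.sum_darts_sub, sub_self]
  · intro a ha
    obtain ⟨i, -, rfl⟩ := Finset.mem_image.1 (vars_rename φ Q ha)
    exact hφt i

theorem not_isDependent_measurementIdeal_of_isAcyclic [IsAlgClosed K] [Finite ι]
    {e : ι → V × V} (hne : ∀ a, (e a).1 ≠ (e a).2) (hinj : Function.Injective (edgeLabel e))
    {t : Set ι} (ht : (fromEdgeSet (edgeLabel e '' t)).IsAcyclic) :
    ¬ IsDependent (measurementIdeal K e) t := by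
  refine not_isDependent_vanishingIdeal fun x => ?_
  obtain ⟨p, hp⟩ := ht.exists_sq_sub_eq
    ((Set.toFinite (edgeLabel e '' t)).subset (by simp [edgeSet_fromEdgeSet]))
    (Function.extend (edgeLabel e) x 0)
  refine ⟨measurementMap e p, ⟨p, rfl⟩, fun a ha => ?_⟩
  rw [measurementMap, hp ((fromEdgeSet_adj _).2 ⟨⟨a, ha, rfl⟩, hne a⟩)]
  exact hinj.extend_apply x 0 a

theorem exists_isCycle_of_isDependent_measurementIdeal [IsAlgClosed K] [Finite ι]
    {G : SimpleGraph V} {e : ι → V × V} (hadj : ∀ a, G.Adj (e a).1 (e a).2)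
    (hinj : Function.Injective (edgeLabel e)) {t : Set ι}
    (ht : IsDependent (measurementIdeal K e) t) :
    ∃ (v : V) (c : G.Walk v v), c.IsCycle ∧ ∀ f ∈ c.edges, f ∈ edgeLabel e '' t := by
  by_contra hno
  refine not_isDependent_measurementIdeal_of_isAcyclic (fun a => (hadj a).ne) hinj
    (fun v c hc => hno ?_) ht
  have hle : fromEdgeSet (edgeLabel e '' t) ≤ G := by
    rintro a b ⟨⟨i, -, hi⟩, -⟩
    exact G.mem_edgeSet.1 (hi ▸ hadj i)
  refine ⟨v, c.mapLe hle, hc.mapLe hle, fun f hf => ?_⟩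
  rw [Walk.edges_mapLe_eq_edges] at hf
  exact (edgeSet_fromEdgeSet _ ▸ c.edges_subset_edgeSet hf).1

theorem isCycleSet_image_iff_minimal_isDependent [IsAlgClosed K] [CharZero K] [Finite ι]
    {G : SimpleGraph V} {e : ι → V × V} (hadj : ∀ a, G.Adj (e a).1 (e a).2)
    (hinj : Function.Injective (edgeLabel e)) {s : Set ι} :
    IsCycleSet G (edgeLabel e '' s) ↔ Minimal (IsDependent (measurementIdeal K e)) s := by
  constructor
  · rintro ⟨v, c, hc, hcs⟩
    have hmem : ∀ a ∈ s, edgeLabel e a ∈ c.edges := fun a ha =>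
      (hcs.symm ▸ ⟨a, ha, rfl⟩ : edgeLabel e a ∈ {f | f ∈ c.edges})
    refine ⟨isDependent_measurementIdeal_of_isCircuit hc.isCircuit fun f hf => hcs ▸ hf,
      fun t ht hts => ?_⟩
    by_contra hst
    obtain ⟨a, has, hat⟩ := Set.not_subset.1 hst
    refine not_isDependent_measurementIdeal_of_isAcyclic (fun a => (hadj a).ne) hinj ?_ ht
    refine (hc.isAcyclic_fromEdgeSet_diff (hmem a has)).anti (fromEdgeSet_mono ?_)
    rintro _ ⟨b, hb, rfl⟩
    exact ⟨hmem b (hts hb), fun h => hat (hinj h ▸ hb)⟩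
  · rintro ⟨hs, hmin⟩
    obtain ⟨v, c, hc, hcs⟩ := exists_isCycle_of_isDependent_measurementIdeal hadj hinj hs
    have hdep : IsDependent (measurementIdeal K e) {a ∈ s | edgeLabel e a ∈ c.edges} :=
      isDependent_measurementIdeal_of_isCircuit hc.isCircuit fun f hf => by
        obtain ⟨a, ha, rfl⟩ := hcs f hf
        exact ⟨a, ⟨ha, hf⟩, rfl⟩
    refine ⟨v, c, hc, Set.Subset.antisymm (fun f hf => hcs f hf) ?_⟩
    rintro _ ⟨a, ha, rfl⟩
    exact (hmin hdep (fun _ hb => hb.1) ha).2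

end Measurement

theorem stmt13_general (n m : ℕ) (G H : SimpleGraph (Fin n))
    (eG eH : Fin m → Fin n × Fin n)
    (hGadj : ∀ a, G.Adj (eG a).1 (eG a).2)
    (hHadj : ∀ a, H.Adj (eH a).1 (eH a).2)
    (hGinj : Function.Injective (fun a => s((eG a).1, (eG a).2)))
    (hHinj : Function.Injective (fun a => s((eH a).1, (eH a).2)))
    (hMeq :
      MvPolynomial.zeroLocus ℂ (MvPolynomial.vanishingIdeal ℂ
        (Set.range (fun p : Fin n → ℂ => fun a : Fin m => (p (eG a).1 - p (eG a).2) ^ 2)))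
      = MvPolynomial.zeroLocus ℂ (MvPolynomial.vanishingIdeal ℂ
        (Set.range (fun p : Fin n → ℂ => fun a : Fin m => (p (eH a).1 - p (eH a).2) ^ 2)))) :
    ∀ s : Set (Fin m),
      IsCycleSet G ((fun a => s((eG a).1, (eG a).2)) '' s) ↔
      IsCycleSet H ((fun a => s((eH a).1, (eH a).2)) '' s) := by
  have hI : measurementIdeal ℂ eG = measurementIdeal ℂ eH := by
    have := congrArg (MvPolynomial.vanishingIdeal ℂ) hMeq
    rwa [vanishingIdeal_zeroLocus_vanishingIdeal, vanishingIdeal_zeroLocus_vanishingIdeal] at this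
  intro s
  calc IsCycleSet G _ ↔ Minimal (IsDependent (measurementIdeal ℂ eG)) s :=
        isCycleSet_image_iff_minimal_isDependent hGadj hGinj
    _ ↔ Minimal (IsDependent (measurementIdeal ℂ eH)) s := by rw [hI]
    _ ↔ IsCycleSet H _ := (isCycleSet_image_iff_minimal_isDependent hHadj hHinj).symm

/-- If two ordered graphs `G` and `H` on `n` vertices, with edges enumerated by
`eG, eH : Fin m → Fin n × Fin n`, have equal 1-dimensional measurement varieties
(Zariski closures of the images of the squared-length measurement maps in `ℂ^m`),
then the induced edge bijection is a cycle isomorphism: a set of edge indices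
corresponds to a simple cycle of `G` iff it corresponds to a simple cycle of `H`. -/
theorem stmt13 (n m : ℕ) (G H : SimpleGraph (Fin n))
    (eG eH : Fin m → Fin n × Fin n)
    (hGadj : ∀ a, G.Adj (eG a).1 (eG a).2)
    (hHadj : ∀ a, H.Adj (eH a).1 (eH a).2)
    (hGinj : Function.Injective (fun a => s((eG a).1, (eG a).2)))
    (hHinj : Function.Injective (fun a => s((eH a).1, (eH a).2)))
    (hGsurj : ∀ e ∈ G.edgeSet, ∃ a, s((eG a).1, (eG a).2) = e)
    (hHsurj : ∀ e ∈ H.edgeSet, ∃ a, s((eH a).1, (eH a).2) = e)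
    (hMeq :
      MvPolynomial.zeroLocus ℂ (MvPolynomial.vanishingIdeal ℂ
        (Set.range (fun p : Fin n → ℂ => fun a : Fin m => (p (eG a).1 - p (eG a).2) ^ 2)))
      = MvPolynomial.zeroLocus ℂ (MvPolynomial.vanishingIdeal ℂ
        (Set.range (fun p : Fin n → ℂ => fun a : Fin m => (p (eH a).1 - p (eH a).2) ^ 2)))) :
    ∀ s : Set (Fin m),
      IsCycleSet G ((fun a => s((eG a).1, (eG a).2)) '' s) ↔
      IsCycleSet H ((fun a => s((eH a).1, (eH a).2)) '' s) :=
  stmt13_general n m G H eG eH hGadj hHadj hGinj hHinj hMeq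
end

section
/- Whitney's theorem: Let G and H be finite graphs with the same number of edges, G 3-connected, and H without isolated vertices. Any bijection between the edge sets of G and H that maps a set of edges to a simple cycle if and only if the original set is a simple cycle (a cycle isomorphism) is induced by a graph isomorphism between G and H. -/
/-!
The stars of a 3-connected graph are determined by its cycles alone. Call a set `D` of edges a
cocycle if it meets every cycle in an even number of edges, a bond if it is a minimal nonempty
cocycle, and nonseparating if any two edges outside `D` are linked by a chain of cycles avoiding
`D`; a cycle isomorphism preserves all three notions.

Since `G` stays connected after deleting a vertex `y` and one more vertex, any two edges at `y`
lie on a cycle whose other edges avoid both; this makes every star of `G` a nonseparating bond.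
Conversely, let `D` be a nonseparating bond of a graph without isolated vertices. If `D` contains
a star, it is that star by minimality. Otherwise take an edge `ab ∈ D` and edges at `a` and at `b`
outside `D`: the chain of cycles linking them joins `a` to `b` off `D`, and closing that path with
`ab` gives a cycle meeting `D` once. So `σ` maps stars to stars, and the vertex map this defines is
an isomorphism inducing `σ`.
-/

namespace Whitney

variable {ε ε' : Type*} (cyc : Set (Set ε))

def IsCocycle (D : Set ε) : Prop :=
  ∀ C ∈ cyc, Even (C ∩ D).ncard

def IsBond (D : Set ε) : Prop :=
  Minimal (fun D => D.Nonempty ∧ IsCocycle cyc D) D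

def Linked (D : Set ε) : ε → ε → Prop :=
  Relation.ReflTransGen fun e f => ∃ C ∈ cyc, Disjoint C D ∧ e ∈ C ∧ f ∈ C

def IsNonseparating (D : Set ε) : Prop :=
  ∀ e f, e ∉ D → f ∉ D → Linked cyc D e f

variable {cyc}

theorem IsCocycle.inter_ne_singleton {D C : Set ε} (hD : IsCocycle cyc D) (hC : C ∈ cyc)
    (e : ε) : C ∩ D ≠ {e} := by
  intro h
  simpa [h] using hD C hC

variable (σ : ε ≃ ε')

theorem isCocycle_image_iff {D : Set ε} :
    IsCocycle (Set.image σ '' cyc) (σ '' D) ↔ IsCocycle cyc D := by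
  simp only [IsCocycle, Set.forall_mem_image, ← Set.image_inter σ.injective,
    Set.ncard_image_of_injective _ σ.injective]

theorem IsBond.image {D : Set ε} (hD : IsBond cyc D) : IsBond (Set.image σ '' cyc) (σ '' D) := by
  refine ⟨⟨hD.prop.1.image σ, (isCocycle_image_iff σ).mpr hD.prop.2⟩, ?_⟩
  rintro _ ⟨hne, hcoc⟩ hle
  obtain ⟨D', hD', rfl⟩ := Set.subset_image_iff.mp hle
  exact Set.image_mono (hD.2 ⟨Set.image_nonempty.mp hne, (isCocycle_image_iff σ).mp hcoc⟩ hD')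

theorem IsNonseparating.image {D : Set ε} (hD : IsNonseparating cyc D) :
    IsNonseparating (Set.image σ '' cyc) (σ '' D) := by
  refine σ.surjective.forall₂.mpr fun e f he hf => ?_
  rw [σ.injective.mem_set_image] at he hf
  refine (hD e f he hf).lift σ ?_
  rintro g g' ⟨C, hC, hCD, hg, hg'⟩
  exact ⟨σ '' C, Set.mem_image_of_mem _ hC, (Set.disjoint_image_iff σ.injective).mpr hCD,
    Set.mem_image_of_mem _ hg, Set.mem_image_of_mem _ hg'⟩

end Whitney

open Whitney

namespace SimpleGraph

variable {V : Type*} (G : SimpleGraph V)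

def cycleEdgeSets : Set (Set G.edgeSet) :=
  {C | ∃ (u : V) (c : G.Walk u u), c.IsCycle ∧ {e : G.edgeSet | ↑e ∈ c.edges} = C}

def star (v : V) : Set G.edgeSet := {e | v ∈ (e : Sym2 V)}

def ConnectedAfterDeletingTwo : Prop :=
  ∀ s : Set V, s.ncard ≤ 2 → (G.induce sᶜ).Connected

variable {G}

theorem mem_cycleEdgeSets_iff_isCycleSet (C : Set G.edgeSet) :
    C ∈ G.cycleEdgeSets ↔ IsCycleSet G (Subtype.val '' C) := by
  refine exists_congr fun u => exists_congr fun c => and_congr_right fun _ => ?_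
  have hsub : {e | e ∈ c.edges} ⊆ Set.range Subtype.val := fun e he =>
    ⟨⟨e, c.edges_subset_edgeSet he⟩, rfl⟩
  change Subtype.val ⁻¹' {e | e ∈ c.edges} = C ↔ _
  constructor
  · rintro rfl
    exact (Set.image_preimage_eq_of_subset hsub).symm
  · rintro h
    rw [h, Set.preimage_image_eq _ Subtype.val_injective]

theorem even_ncard_inter_star {u : V} {c : G.Walk u u} (hc : c.IsCycle) (v : V) :
    Even ({e : G.edgeSet | ↑e ∈ c.edges} ∩ G.star v).ncard := by
  classical
  have hset : {e : G.edgeSet | ↑e ∈ c.edges} ∩ G.star v =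
      Subtype.val ⁻¹' ↑(c.edges.filter (v ∈ ·)).toFinset := by
    ext e
    simp [star]
  have hsub : (↑(c.edges.filter (v ∈ ·)).toFinset : Set (Sym2 V)) ⊆ Set.range Subtype.val :=
    fun e he => ⟨⟨e, c.edges_subset_edgeSet (by simp at he; exact he.1)⟩, rfl⟩
  rw [hset, Set.ncard_preimage_of_injective_subset_range Subtype.val_injective hsub,
    Set.ncard_coe_finset, List.toFinset_card_of_nodup (hc.edges_nodup.filter _),
    ← List.countP_eq_length_filter]
  exact (hc.isTrail.even_countP_edges_iff v).mpr fun h => absurd rfl h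

theorem exists_isPath_of_connected_induce_compl {s : Set V} (hconn : (G.induce sᶜ).Connected)
    {a b : V} (ha : a ∉ s) (hb : b ∉ s) :
    ∃ p : G.Walk a b, p.IsPath ∧ ∀ x ∈ p.support, x ∉ s := by
  classical
  obtain ⟨q⟩ := hconn.preconnected ⟨a, ha⟩ ⟨b, hb⟩
  have hq : ∀ x ∈ (q.toPath.1.map (Embedding.induce sᶜ).toHom).support, x ∉ s := by
    rw [Walk.support_map]
    rintro _ hx
    obtain ⟨x, -, rfl⟩ := List.mem_map.mp hx
    exact x.2
  exact ⟨_, q.toPath.2.map (Embedding.induce (G := G) sᶜ).injective, hq⟩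

theorem exists_cycle_through_edges {s : Set V} (hconn : (G.induce sᶜ).Connected) {x y z : V}
    {e f : G.edgeSet} (he : (e : Sym2 V) = s(y, x)) (hf : (f : Sym2 V) = s(y, z)) (hef : e ≠ f)
    (hy : y ∈ s) (hx : x ∉ s) (hz : z ∉ s) :
    ∃ C ∈ G.cycleEdgeSets, e ∈ C ∧ f ∈ C ∧
      ∀ g ∈ C, g = e ∨ g = f ∨ ∀ u ∈ (g : Sym2 V), u ∉ s := by
  have hyx : G.Adj y x := G.mem_edgeSet.mp (he ▸ e.2)
  have hyz : G.Adj y z := G.mem_edgeSet.mp (hf ▸ f.2)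
  obtain ⟨p, hp, hps⟩ := exists_isPath_of_connected_induce_compl hconn hx hz
  have hyp : y ∉ p.support := fun h => hps y h hy
  have hpe : ∀ d ∈ p.edges, ∀ u ∈ d, u ∉ s := fun d hd u hu =>
    hps u (p.mem_support_of_mem_edges hd hu)
  have hedges : (Walk.cons hyx (p.concat hyz.symm)).edges = s(y, x) :: (p.edges ++ [s(z, y)]) := by
    simp [Walk.edges_concat]
  have hc : (Walk.cons hyx (p.concat hyz.symm)).IsCycle := by
    refine (Walk.cons_isCycle_iff _ hyx).mpr ⟨hp.concat hyp hyz.symm, ?_⟩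
    rw [Walk.edges_concat, List.concat_eq_append, List.mem_append, List.mem_singleton]
    rintro (h | h)
    · exact hyp (p.fst_mem_support_of_mem_edges h)
    · rcases Sym2.eq_iff.mp h with ⟨rfl, -⟩ | ⟨-, rfl⟩
      · exact hz hy
      · exact hef (Subtype.ext (he.trans hf.symm))
  refine ⟨_, ⟨y, _, hc, rfl⟩, by simp [hedges, he], by simp [hedges, hf, Sym2.eq_swap], ?_⟩
  intro g hg
  simp only [Set.mem_ofPred_eq, hedges, List.mem_cons, List.mem_append, List.not_mem_nil,
    or_false] at hg
  rcases hg with hg | hg | hg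
  · exact Or.inl (Subtype.ext (hg.trans he.symm))
  · exact Or.inr (Or.inr (hpe _ hg))
  · exact Or.inr (Or.inl (Subtype.ext (hg.trans (Sym2.eq_swap.trans hf.symm))))

theorem isCocycle_star (v : V) : IsCocycle G.cycleEdgeSets (G.star v) :=
  fun _ ⟨_, _, hc, hC⟩ => hC ▸ even_ncard_inter_star hc v

namespace ConnectedAfterDeletingTwo

theorem exists_ne_ne (hG : G.ConnectedAfterDeletingTwo) (u v : V) : ∃ w, w ≠ u ∧ w ≠ v := by
  obtain ⟨⟨w, hw⟩⟩ := (hG {u, v} ((Set.ncard_insert_le _ _).trans (by simp))).nonempty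
  exact ⟨w, by simpa [not_or] using hw⟩

theorem exists_adj_ne (hG : G.ConnectedAfterDeletingTwo) {u v : V} (huv : u ≠ v) :
    ∃ w, G.Adj u w ∧ w ≠ v := by
  obtain ⟨w, hwu, hwv⟩ := hG.exists_ne_ne u v
  obtain ⟨p, -, hp⟩ := exists_isPath_of_connected_induce_compl (hG {v} (by simp))
    (Set.notMem_singleton_iff.mpr huv) (Set.notMem_singleton_iff.mpr hwv)
  cases p with
  | nil => exact absurd rfl hwu
  | cons h q => exact ⟨_, h, fun hm => hp _ (by simp) hm⟩

theorem star_nonempty (hG : G.ConnectedAfterDeletingTwo) (v : V) : (G.star v).Nonempty := by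
  obtain ⟨w, hwv, -⟩ := hG.exists_ne_ne v v
  obtain ⟨x, hvx, -⟩ := hG.exists_adj_ne hwv.symm
  exact ⟨⟨s(v, x), hvx⟩, Sym2.mem_mk_left v x⟩

theorem isBond_star (hG : G.ConnectedAfterDeletingTwo) (v : V) :
    IsBond G.cycleEdgeSets (G.star v) := by
  refine ⟨⟨hG.star_nonempty v, isCocycle_star v⟩, ?_⟩
  rintro D ⟨⟨e, heD⟩, hD⟩ hDv
  by_contra hvD
  obtain ⟨f, hfv, hfD⟩ := Set.not_subset.mp hvD
  obtain ⟨x, hx⟩ := Sym2.mem_iff_exists.mp (hDv heD)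
  obtain ⟨z, hz⟩ := Sym2.mem_iff_exists.mp hfv
  have hvx : G.Adj v x := G.mem_edgeSet.mp (hx ▸ e.2)
  have hvz : G.Adj v z := G.mem_edgeSet.mp (hz ▸ f.2)
  obtain ⟨C, hC, heC, -, hCe⟩ := exists_cycle_through_edges (hG {v} (by simp)) hx hz
    (fun h => hfD (h ▸ heD)) rfl (Set.notMem_singleton_iff.mpr hvx.ne')
    (Set.notMem_singleton_iff.mpr hvz.ne')
  refine hD.inter_ne_singleton hC e
    (Set.eq_singleton_iff_unique_mem.mpr ⟨⟨heC, heD⟩, fun g ⟨hgC, hgD⟩ => ?_⟩)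
  rcases hCe g hgC with rfl | rfl | hg
  · rfl
  · exact absurd hgD hfD
  · exact absurd rfl (hg v (hDv hgD))

theorem linked_star_of_mem_of_mem (hG : G.ConnectedAfterDeletingTwo) {v a : V}
    {e f : G.edgeSet} (hae : a ∈ (e : Sym2 V)) (haf : a ∈ (f : Sym2 V))
    (hve : v ∉ (e : Sym2 V)) (hvf : v ∉ (f : Sym2 V)) :
    Linked G.cycleEdgeSets (G.star v) e f := by
  rcases eq_or_ne e f with rfl | hef
  · exact .refl
  have hout : ∀ {d : G.edgeSet} {y : V}, (d : Sym2 V) = s(a, y) → v ∉ (d : Sym2 V) →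
      y ∉ ({v, a} : Set V) := by
    intro d y hd hvd
    have hay : G.Adj a y := G.mem_edgeSet.mp (hd ▸ d.2)
    simp only [Set.mem_insert_iff, Set.mem_singleton_iff, not_or]
    exact ⟨fun hyv => hvd (hd ▸ hyv ▸ Sym2.mem_mk_right a y), hay.ne'⟩
  obtain ⟨x, hx⟩ := Sym2.mem_iff_exists.mp hae
  obtain ⟨z, hz⟩ := Sym2.mem_iff_exists.mp haf
  obtain ⟨C, hC, heC, hfC, hCe⟩ :=
    exists_cycle_through_edges (hG {v, a} ((Set.ncard_insert_le _ _).trans (by simp))) hx hz hef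
      (by simp) (hout hx hve) (hout hz hvf)
  refine .single ⟨C, hC, Set.disjoint_left.mpr fun g hgC hgv => ?_, heC, hfC⟩
  rcases hCe g hgC with rfl | rfl | hg
  · exact hve hgv
  · exact hvf hgv
  · exact hg v hgv (by simp)

theorem linked_star_of_walk (hG : G.ConnectedAfterDeletingTwo) {v a b : V} (p : G.Walk a b)
    (hvp : v ∉ p.support) {e f : G.edgeSet} (hae : a ∈ (e : Sym2 V)) (hbf : b ∈ (f : Sym2 V))
    (hve : v ∉ (e : Sym2 V)) (hvf : v ∉ (f : Sym2 V)) :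
    Linked G.cycleEdgeSets (G.star v) e f := by
  induction p generalizing e with
  | nil => exact hG.linked_star_of_mem_of_mem hae hbf hve hvf
  | @cons a m b h q ih =>
    rw [Walk.support_cons, List.mem_cons, not_or] at hvp
    have hvg : v ∉ s(a, m) := by
      rw [Sym2.mem_iff, not_or]
      exact ⟨hvp.1, fun hvm => hvp.2 (hvm ▸ q.start_mem_support)⟩
    exact (hG.linked_star_of_mem_of_mem (f := ⟨s(a, m), h⟩) hae (Sym2.mem_mk_left a m) hve
      hvg).trans (ih hvp.2 (Sym2.mem_mk_right a m) hbf hvg)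

theorem isNonseparating_star (hG : G.ConnectedAfterDeletingTwo) (v : V) :
    IsNonseparating G.cycleEdgeSets (G.star v) := by
  intro e f he hf
  obtain ⟨a, hae⟩ : ∃ a, a ∈ (e : Sym2 V) := ⟨_, Sym2.out_fst_mem _⟩
  obtain ⟨b, hbf⟩ : ∃ b, b ∈ (f : Sym2 V) := ⟨_, Sym2.out_fst_mem _⟩
  obtain ⟨p, -, hp⟩ := exists_isPath_of_connected_induce_compl (hG {v} (by simp))
    (fun h => he (Set.mem_singleton_iff.mp h ▸ hae))
    (fun h => hf (Set.mem_singleton_iff.mp h ▸ hbf))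
  exact hG.linked_star_of_walk p (fun h => hp v h rfl) hae hbf he hf

theorem injective_of_mem_iff {W : Type*} {H : SimpleGraph W} (hG : G.ConnectedAfterDeletingTwo)
    (σ : G.edgeSet → H.edgeSet) {f : V → W}
    (hf : ∀ e v, f v ∈ (σ e : Sym2 W) ↔ v ∈ (e : Sym2 V)) : Function.Injective f := by
  intro u v huv
  by_contra hne
  obtain ⟨w, huw, hwv⟩ := hG.exists_adj_ne hne
  have hv : v ∈ s(u, w) :=
    (hf ⟨s(u, w), huw⟩ v).mp (huv ▸ (hf _ u).mpr (Sym2.mem_mk_left u w))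
  rcases Sym2.mem_iff.mp hv with h | h
  · exact hne h.symm
  · exact hwv h.symm

end ConnectedAfterDeletingTwo

theorem not_reachable_deleteEdges_of_isCocycle {D : Set G.edgeSet}
    (hD : IsCocycle G.cycleEdgeSets D) {e : G.edgeSet} (he : e ∈ D) {a b : V}
    (hab : (e : Sym2 V) = s(a, b)) : ¬ (G.deleteEdges (Subtype.val '' D)).Reachable a b := by
  classical
  rintro ⟨q⟩
  let p : G.Walk a b := q.toPath.1.mapLe (G.deleteEdges_le _)
  have hpD : ∀ d ∈ p.edges, d ∉ Subtype.val '' D := fun d hd => by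
    rw [Walk.edges_mapLe_eq_edges] at hd
    have := q.toPath.1.edges_subset_edgeSet hd
    rw [edgeSet_deleteEdges] at this
    exact this.2
  have hba : G.Adj b a := (G.mem_edgeSet.mp (hab ▸ e.2)).symm
  have hc : (Walk.cons hba p).IsCycle := (Walk.cons_isCycle_iff p hba).mpr
    ⟨q.toPath.2.mapLe _, fun h => hpD _ h ⟨e, he, hab.trans Sym2.eq_swap⟩⟩
  refine hD.inter_ne_singleton ⟨b, _, hc, rfl⟩ e
    (Set.eq_singleton_iff_unique_mem.mpr ⟨⟨?_, he⟩, fun g ⟨hgC, hgD⟩ => ?_⟩)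
  · simp [hab, Sym2.eq_swap]
  · simp only [Set.mem_ofPred_eq, Walk.edges_cons, List.mem_cons] at hgC
    rcases hgC with hg | hg
    · exact Subtype.ext (hg.trans (Sym2.eq_swap.trans hab.symm))
    · exact absurd ⟨g, hgD, rfl⟩ (hpD _ hg)

theorem reachable_deleteEdges_of_linked {D : Set G.edgeSet} {e f : G.edgeSet}
    (hef : Linked G.cycleEdgeSets D e f) (he : e ∉ D) {a b : V} (ha : a ∈ (e : Sym2 V))
    (hb : b ∈ (f : Sym2 V)) : (G.deleteEdges (Subtype.val '' D)).Reachable a b := by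
  classical
  induction hef generalizing b with
  | refl =>
    rcases eq_or_ne a b with rfl | hab
    · rfl
    have he' : (e : Sym2 V) = s(a, b) := (Sym2.mem_and_mem_iff hab).mp ⟨ha, hb⟩
    refine Adj.reachable (deleteEdges_adj.mpr ⟨G.mem_edgeSet.mp (he' ▸ e.2), fun h => he ?_⟩)
    exact Subtype.val_injective.mem_set_image.mp (he' ▸ h)
  | @tail g f _ hstep ih =>
    obtain ⟨C, ⟨u, c, -, rfl⟩, hCD, hg, hf⟩ := hstep
    obtain ⟨x, hx⟩ : ∃ x, x ∈ (g : Sym2 V) := ⟨_, Sym2.out_fst_mem _⟩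
    have hcD : ∀ d ∈ c.edges, d ∉ Subtype.val '' D := by
      rintro d hd ⟨d', hd'D, rfl⟩
      exact Set.disjoint_left.mp hCD hd hd'D
    let c' := c.toDeleteEdges _ hcD
    have hreach : ∀ y ∈ c.support, (G.deleteEdges (Subtype.val '' D)).Reachable u y :=
      fun y hy => ⟨c'.takeUntil y (by rwa [Walk.support_transfer])⟩
    exact (ih hx).trans ((hreach x (c.mem_support_of_mem_edges hg hx)).symm.trans
      (hreach b (c.mem_support_of_mem_edges hf hb)))

theorem exists_eq_star_of_isBond (hG : ∀ v, ∃ w, G.Adj v w) {D : Set G.edgeSet}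
    (hbond : IsBond G.cycleEdgeSets D) (hsep : IsNonseparating G.cycleEdgeSets D) :
    ∃ v, D = G.star v := by
  by_cases hstar : ∃ v, G.star v ⊆ D
  · obtain ⟨v, hv⟩ := hstar
    obtain ⟨w, hvw⟩ := hG v
    have hne : (G.star v).Nonempty := ⟨⟨s(v, w), hvw⟩, Sym2.mem_mk_left v w⟩
    exact ⟨v, (hbond.2 ⟨hne, isCocycle_star v⟩ hv).antisymm hv⟩
  rw [not_exists] at hstar
  obtain ⟨e, he⟩ := hbond.prop.1
  obtain ⟨a, b, hab⟩ := Sym2.exists.mp ⟨_, rfl⟩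
  obtain ⟨ea, hea, heaD⟩ := Set.not_subset.mp (hstar a)
  obtain ⟨eb, heb, hebD⟩ := Set.not_subset.mp (hstar b)
  exact (not_reachable_deleteEdges_of_isCocycle hbond.prop.2 he hab
    (reachable_deleteEdges_of_linked (hsep ea eb heaD hebD) heaD hea heb)).elim

variable {W : Type*} {H : SimpleGraph W}

theorem cycleEdgeSets_eq_image (σ : G.edgeSet ≃ H.edgeSet)
    (hσ : ∀ E' : Set G.edgeSet, IsCycleSet G ((fun e : G.edgeSet => (e : Sym2 V)) '' E') ↔
      IsCycleSet H ((fun e : G.edgeSet => (σ e : Sym2 W)) '' E')) :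
    H.cycleEdgeSets = Set.image σ '' G.cycleEdgeSets := by
  have key : ∀ C, σ '' C ∈ H.cycleEdgeSets ↔ C ∈ G.cycleEdgeSets := fun C => by
    rw [mem_cycleEdgeSets_iff_isCycleSet, mem_cycleEdgeSets_iff_isCycleSet, Set.image_image, hσ]
  ext C'
  obtain ⟨C, rfl⟩ := Set.image_surjective.mpr σ.surjective C'
  rw [key, (Set.image_injective.mpr σ.injective).mem_set_image]

theorem exists_iso_of_mem_iff (hH : ∀ w, ∃ w', H.Adj w w') (σ : G.edgeSet ≃ H.edgeSet)
    {f : V → W} (hinj : Function.Injective f)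
    (hf : ∀ e v, f v ∈ (σ e : Sym2 W) ↔ v ∈ (e : Sym2 V)) :
    ∃ φ : G ≃g H, ∀ e : G.edgeSet, (σ e : Sym2 W) = Sym2.map φ (e : Sym2 V) := by
  have hmap : ∀ e : G.edgeSet, (σ e : Sym2 W) = Sym2.map f e := by
    rintro ⟨e, he⟩
    induction e using Sym2.ind with
    | h u u' =>
      rw [Sym2.map_mk]
      exact (Sym2.mem_and_mem_iff (hinj.ne (G.mem_edgeSet.mp he).ne)).mp
        ⟨(hf _ u).mpr (Sym2.mem_mk_left u u'), (hf _ u').mpr (Sym2.mem_mk_right u u')⟩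
  have hedge : H.edgeSet = Sym2.map f '' G.edgeSet := by
    ext d
    constructor
    · intro hd
      exact ⟨_, (σ.symm ⟨d, hd⟩).2, by rw [← hmap, σ.apply_symm_apply]⟩
    · rintro ⟨d, hd, rfl⟩
      exact hmap ⟨d, hd⟩ ▸ (σ ⟨d, hd⟩).2
  have hadj : ∀ u u', H.Adj (f u) (f u') ↔ G.Adj u u' := fun u u' => by
    rw [← mem_edgeSet, ← mem_edgeSet, hedge, ← Sym2.map_mk,
      (Sym2.map.injective hinj).mem_set_image]
  have hsurj : Function.Surjective f := by
    intro w
    obtain ⟨w', hww'⟩ := hH w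
    obtain ⟨d, -, hd⟩ : s(w, w') ∈ Sym2.map f '' G.edgeSet := hedge ▸ hww'
    obtain ⟨v, -, hv⟩ := Sym2.mem_map.mp (hd ▸ Sym2.mem_mk_left w w')
    exact ⟨v, hv⟩
  exact ⟨⟨Equiv.ofBijective f ⟨hinj, hsurj⟩, hadj _ _⟩, hmap⟩

end SimpleGraph

open SimpleGraph Whitney

theorem stmt14_general {V W : Type*}
    (G : SimpleGraph V) (H : SimpleGraph W)
    (h3conn : ∀ s : Set V, s.ncard ≤ 2 → (G.induce sᶜ).Connected)
    (hiso : ∀ w : W, ∃ w', H.Adj w w')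
    (σ : G.edgeSet ≃ H.edgeSet)
    (hcyc : ∀ E' : Set G.edgeSet,
      IsCycleSet G ((fun e : G.edgeSet => (e : Sym2 V)) '' E') ↔
      IsCycleSet H ((fun e : G.edgeSet => (σ e : Sym2 W)) '' E')) :
    ∃ φ : G ≃g H, ∀ e : G.edgeSet, (σ e : Sym2 W) = Sym2.map φ (e : Sym2 V) := by
  have hG : G.ConnectedAfterDeletingTwo := h3conn
  have hcycles := cycleEdgeSets_eq_image σ hcyc
  have hstar : ∀ v, ∃ w, σ '' G.star v = H.star w := fun v =>
    exists_eq_star_of_isBond hiso (hcycles ▸ (hG.isBond_star v).image σ)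
      (hcycles ▸ (hG.isNonseparating_star v).image σ)
  choose f hf using hstar
  have hmem : ∀ e v, f v ∈ (σ e : Sym2 W) ↔ v ∈ (e : Sym2 V) := fun e v =>
    (Set.ext_iff.mp (hf v) (σ e)).symm.trans σ.injective.mem_set_image
  exact exists_iso_of_mem_iff hiso σ (hG.injective_of_mem_iff σ hmem) hmem

/-- Whitney's theorem: if `G` is 3-connected (at least 4 vertices, and still connected
after deleting any 2 vertices), `H` has no isolated vertices, and `σ` is an edge
bijection mapping simple-cycle edge sets to simple-cycle edge sets and conversely, then
`σ` is induced by a graph isomorphism. -/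
theorem stmt14 {V W : Type*} [Fintype V] [Fintype W]
    (G : SimpleGraph V) (H : SimpleGraph W)
    (hcard : 4 ≤ Fintype.card V)
    (h3conn : ∀ s : Set V, s.ncard ≤ 2 → (G.induce sᶜ).Connected)
    (hiso : ∀ w : W, ∃ w', H.Adj w w')
    (σ : G.edgeSet ≃ H.edgeSet)
    (hcyc : ∀ E' : Set G.edgeSet,
      IsCycleSet G ((fun e : G.edgeSet => (e : Sym2 V)) '' E') ↔
      IsCycleSet H ((fun e : G.edgeSet => (σ e : Sym2 W)) '' E')) :
    ∃ φ : G ≃g H, ∀ e : G.edgeSet, (σ e : Sym2 W) = Sym2.map φ (e : Sym2 V) :=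
  stmt14_general G H h3conn hiso σ hcyc
end

section
/- Let p be a generic configuration of n points in ℂ^d with n ≥ d+2, let π be the projection to ℂ^{d-1} forgetting the last coordinate, and let L = π⁻¹(π(p)) be the affine space of lifts of q := π(p). Then L contains infinitely many generic configurations lying in pairwise distinct affine classes: for any finite list of configurations p¹,...,p^k ∈ L there exists a generic p' ∈ L that is not an affine image of any pⁱ. -/
/-! Adjoining to `ℚ` the coordinates of `p` and of all the `pⁱ` gives a countable field `K`, over
which `ℂ` has uncountable transcendence degree. Replace the last coordinates of `p` by numbers
`tᵢ` algebraically independent over `K`: the result is still generic. If it were an affine image of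
some `pⁱ`, every `tᵢ` would be a complex affine function of the `K`-rational point `pⁱᵢ`. Since
`n ≥ d + 2`, these points satisfy a nontrivial affine relation over `K`, which the affine function
carries to a nontrivial `K`-linear relation among the `tᵢ`. -/

open Cardinal Module Set

universe u v

theorem exists_algebraicIndependent_of_mk_le_aleph0 {F : Type*} {L : Type u} [Field F] [Field L]
    [Algebra F L] [IsAlgClosed L] (hF : #F ≤ ℵ₀) (hL : ℵ₀ < #L) (ι : Type v) [Countable ι] :
    ∃ t : ι → L, AlgebraicIndependent F t := by
  obtain ⟨s, hs⟩ := exists_isTranscendenceBasis F L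
  have hs_card : #L = #s := by
    simpa using IsAlgClosed.cardinal_eq_cardinal_transcendence_basis_of_aleph0_lt _ hs hF hL
  have : lift.{u} #ι ≤ lift.{v} #s := by
    rw [← hs_card]
    exact (lift_le_aleph0.mpr mk_le_aleph0).trans (aleph0_le_lift.mpr hL.le)
  obtain ⟨e⟩ := lift_mk_le'.mp this
  exact ⟨fun i ↦ e i, hs.1.comp e e.injective⟩

theorem AlgebraicIndependent.ite_of_tower {ι R S A : Type*} [CommRing R] [CommRing S]
    [CommRing A] [Algebra R S] [Algebra R A] [Algebra S A] [IsScalarTower R S A]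
    {x y : ι → A} (P : ι → Prop) [DecidablePred P] (hx : AlgebraicIndependent R x)
    (hxS : range x ⊆ range (algebraMap S A)) (hy : AlgebraicIndependent S y) :
    AlgebraicIndependent R (fun i ↦ if P i then x i else y i) := by
  have h := (hx.comp ((↑) : {i // P i} → ι) Subtype.val_injective).sumElim_of_tower
    ((range_comp_subset_range _ _).trans hxS)
    (hy.comp ((↑) : {i // ¬P i} → ι) Subtype.val_injective)
  convert h.comp _ ((Equiv.sumCompl P).symm.trans (Equiv.sumComm _ _)).injective with i
  by_cases hi : P i <;> simp [hi]

theorem exists_nontrivial_affine_relation_of_finrank_succ_lt_card {K V ι : Type*} [Field K]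
    [AddCommGroup V] [Module K V] [FiniteDimensional K V] [Fintype ι] (v : ι → V)
    (h : finrank K V + 1 < Fintype.card ι) :
    ∃ (s : Finset ι) (l : ι → K),
      ∑ i ∈ s, l i = 0 ∧ ∑ i ∈ s, l i • v i = 0 ∧ ∃ i ∈ s, l i ≠ 0 := by
  have hv : ¬AffineIndependent K v := fun hv ↦ h.not_ge <|
    hv.card_le_finrank_succ.trans (by gcongr; exact Submodule.finrank_le _)
  simpa [affineIndependent_iff] using hv

theorem not_linearIndependent_of_eq_map_add_const {K V W ι : Type*} [Field K] [AddCommGroup V]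
    [Module K V] [FiniteDimensional K V] [AddCommGroup W] [Module K W] [Fintype ι]
    (hι : finrank K V + 1 < Fintype.card ι) (f : V →ₗ[K] W) (c : W) (w : ι → V) (t : ι → W)
    (ht : ∀ i, t i = f (w i) + c) : ¬LinearIndependent K t := by
  intro hli
  obtain ⟨s, l, hl_sum, hl_comb, i, hi, hli0⟩ :=
    exists_nontrivial_affine_relation_of_finrank_succ_lt_card w hι
  refine hli0 (linearIndependent_iff'.mp hli s l ?_ i hi)
  calc ∑ i ∈ s, l i • t i = f (∑ i ∈ s, l i • w i) + (∑ i ∈ s, l i) • c := by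
        simp [ht, smul_add, Finset.sum_add_distrib, Finset.sum_smul]
    _ = 0 := by simp [hl_comb, hl_sum]

theorem not_exists_mulVec_add_of_linearIndependent {K L ι κ κ' : Type*} [Field K] [Field L]
    [Algebra K L] [Fintype ι] [Fintype κ] (hι : Fintype.card κ + 1 < Fintype.card ι)
    (w : ι → κ → K) (q : ι → κ' → L) (j : κ') (hq : LinearIndependent K fun i ↦ q i j) :
    ¬∃ (M : Matrix κ' κ L) (c : κ' → L), ∀ i, q i = M.mulVec (algebraMap K L ∘ w i) + c := by
  rintro ⟨M, c, h⟩
  let f := (LinearMap.proj j ∘ₗ M.mulVecLin).restrictScalars K ∘ₗ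
    (Algebra.linearMap K L).compLeft κ
  exact not_linearIndependent_of_eq_map_add_const (by simpa using hι) f (c j) w _
    (fun i ↦ congr_fun (h i) j) hq

theorem stmt19_general (n d : ℕ) (hd : 1 ≤ d) (hn : d + 2 ≤ n)
    (p : Fin n → Fin d → ℂ)
    (hp : AlgebraicIndependent ℚ (fun ik : Fin n × Fin d => p ik.1 ik.2))
    (k : ℕ) (ps : Fin k → (Fin n → Fin d → ℂ)) :
    ∃ p' : Fin n → Fin d → ℂ,
      (∀ i, ∀ c : Fin d, (c : ℕ) + 1 < d → p' i c = p i c) ∧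
      AlgebraicIndependent ℚ (fun ik : Fin n × Fin d => p' ik.1 ik.2) ∧
      ∀ a : Fin k, ¬ ∃ (M : Matrix (Fin d) (Fin d) ℂ) (t : Fin d → ℂ),
          ∀ i, p' i = M.mulVec (ps a i) + t := by
  let K := IntermediateField.adjoin ℚ (range (fun ik : Fin n × Fin d ↦ p ik.1 ik.2) ∪
    range (fun x : Fin k × Fin n × Fin d ↦ ps x.1 x.2.1 x.2.2))
  have hK : #K ≤ ℵ₀ := by
    refine (IntermediateField.cardinalMk_adjoin_le ℚ _).trans (max_le (max_le ?_ ?_) le_rfl)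
    · exact mk_le_aleph0
    · exact mk_le_aleph0_iff.mpr ((countable_range _).union (countable_range _)).to_subtype
  obtain ⟨t, ht⟩ := exists_algebraicIndependent_of_mk_le_aleph0 hK
    (mk_complex ▸ aleph0_lt_continuum) (Fin n × Fin d)
  refine ⟨fun i c ↦ if (c : ℕ) + 1 < d then p i c else t (i, c), fun i c hc ↦ if_pos hc, ?_, ?_⟩
  · have hpK : range (fun ik : Fin n × Fin d ↦ p ik.1 ik.2) ⊆ range (algebraMap K ℂ) :=
      fun z hz ↦ ⟨⟨z, IntermediateField.subset_adjoin _ _ (.inl hz)⟩, rfl⟩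
    exact (hp.ite_of_tower (fun ik ↦ (ik.2 : ℕ) + 1 < d) hpK ht :)
  · intro a
    let last : Fin d := ⟨d - 1, by omega⟩
    have hlast : ¬(last : ℕ) + 1 < d := by simp only [last]; omega
    let w : Fin n → Fin d → K := fun i j ↦
      ⟨ps a i j, IntermediateField.subset_adjoin _ _ (.inr ⟨(a, i, j), rfl⟩)⟩
    have hcard : Fintype.card (Fin d) + 1 < Fintype.card (Fin n) := by
      simp only [Fintype.card_fin]; omega
    refine not_exists_mulVec_add_of_linearIndependent hcard w _ last ?_
    simp only [hlast, if_false]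
    exact ht.linearIndependent.comp _ (Prod.mk_left_injective last)

/-- Let `p` be a generic configuration of `n ≥ d+2` points in `ℂ^d` and let `L` be the
affine space of lifts of its projection to `ℂ^{d-1}` (configurations agreeing with `p`
in all but the last coordinate). Then for any finite list of configurations in `L`, there
is a generic configuration in `L` that is not an affine image of any of them; hence `L`
contains infinitely many generic configurations in pairwise distinct affine classes. -/
theorem stmt19 (n d : ℕ) (hd : 1 ≤ d) (hn : d + 2 ≤ n)
    (p : Fin n → Fin d → ℂ)
    (hp : AlgebraicIndependent ℚ (fun ik : Fin n × Fin d => p ik.1 ik.2))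
    (k : ℕ) (ps : Fin k → (Fin n → Fin d → ℂ))
    (hps : ∀ a : Fin k, ∀ i, ∀ c : Fin d, (c : ℕ) + 1 < d → ps a i c = p i c) :
    ∃ p' : Fin n → Fin d → ℂ,
      (∀ i, ∀ c : Fin d, (c : ℕ) + 1 < d → p' i c = p i c) ∧
      AlgebraicIndependent ℚ (fun ik : Fin n × Fin d => p' ik.1 ik.2) ∧
      ∀ a : Fin k, ¬ ∃ (M : Matrix (Fin d) (Fin d) ℂ) (t : Fin d → ℂ),
          ∀ i, p' i = M.mulVec (ps a i) + t :=
  stmt19_general n d hd hn p hp k ps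
end
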